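/- arXiv:2601.11841 — 5 statements merged into one kernel-verified Lean document; each statement's English description precedes it below -/
import Mathlib

section
/- If every vertex of a cycle graph C_n is independently included in a random set S with probability 1/2, then the probability that S is a dominating set is at most (7/8)^⌊n/3⌋. -/
/-- The cycle graph `C_n` on vertex set `ZMod n`. -/
def cycleGraph (n : ℕ) : SimpleGraph (ZMod n) :=
  SimpleGraph.fromRel (fun u v => v = u + 1)

/-- `D` is a dominating set of `C_n`. -/
def IsDominating (n : ℕ) (D : Finset (ZMod n)) : Prop :=
  ∀ v : ZMod n, ∃ u ∈ D, u = v ∨ (cycleGraph n).Adj u v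

/-- If each vertex of `C_n` is included in a random set independently with probability
`1/2` (i.e., the inclusion indicator is uniform over `ZMod n → Bool`), then the
probability that the resulting set is dominating is at most `(7/8)^⌊n/3⌋`. -/
theorem random_set_dominating_prob (n : ℕ) [NeZero n] (hn : 3 ≤ n) :
    (Set.ncard {f : ZMod n → Bool |
        IsDominating n (Finset.univ.filter (fun v => f v = true))} : ℝ) / 2 ^ n
      ≤ (7 / 8 : ℝ) ^ (n / 3) := by
  classical
  set m := n / 3 with hm
  have hmn : 3 * m ≤ n := by
    have := Nat.div_mul_le_self n 3
    omega
  -- the vertices of the i-th triple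
  set v : Fin m × Fin 3 → ZMod n := fun p => ((3 * (p.1 : ℕ) + (p.2 : ℕ) : ℕ) : ZMod n)
    with hv
  have hvlt : ∀ p : Fin m × Fin 3, 3 * (p.1 : ℕ) + (p.2 : ℕ) < n := by
    intro p
    have h1 := p.1.2
    have h2 := p.2.2
    omega
  have hvinj : Function.Injective v := by
    intro p q h
    have hp := ZMod.val_cast_of_lt (hvlt p)
    have hq := ZMod.val_cast_of_lt (hvlt q)
    have heq : 3 * (p.1 : ℕ) + (p.2 : ℕ) = 3 * (q.1 : ℕ) + (q.2 : ℕ) := by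
      have h' : ((3 * (p.1 : ℕ) + (p.2 : ℕ) : ℕ) : ZMod n).val
          = ((3 * (q.1 : ℕ) + (q.2 : ℕ) : ℕ) : ZMod n).val := congrArg ZMod.val h
      rw [hp, hq] at h'
      exact h'
    have h2 := p.2.2
    have h3 := q.2.2
    exact Prod.ext (Fin.ext (by omega)) (Fin.ext (by omega))
  set D : Finset (ZMod n → Bool) :=
    Finset.univ.filter (fun f => IsDominating n (Finset.univ.filter (fun w => f w = true)))
    with hD
  set E : Finset (ZMod n → Bool) :=
    Finset.univ.filter (fun f => ∀ i : Fin m,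
      f (v (i, 0)) = true ∨ f (v (i, 1)) = true ∨ f (v (i, 2)) = true) with hE
  -- D ⊆ E : dominating the middle vertex of each triple
  have hDE : D ⊆ E := by
    intro f hf
    rw [hD, Finset.mem_filter] at hf
    rw [hE, Finset.mem_filter]
    refine ⟨Finset.mem_univ _, fun i => ?_⟩
    obtain ⟨u, hu, hcase⟩ := hf.2 (v (i, 1))
    rw [Finset.mem_filter] at hu
    have hu' := hu.2
    have hmid : v (i, 1) = ((3 * (i : ℕ) + 1 : ℕ) : ZMod n) := by simp [hv]
    rcases hcase with h | h
    · exact Or.inr (Or.inl (by rw [← h]; exact hu'))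
    · rcases h with ⟨hne, h | h⟩
      · -- v (i,1) = u + 1, so u = 3i
        left
        have hthis : u = ((3 * (i : ℕ) + 0 : ℕ) : ZMod n) := by
          have h1 : ((3 * (i : ℕ) + 1 : ℕ) : ZMod n) = u + 1 := by rw [← hmid]; exact h
          push_cast at h1 ⊢
          linear_combination - h1
        have h0 : v (i, 0) = ((3 * (i : ℕ) + 0 : ℕ) : ZMod n) := by simp [hv]
        rw [h0, ← hthis]; exact hu'
      · -- u = v (i,1) + 1, so u = 3i + 2
        right; right
        have hthis : u = ((3 * (i : ℕ) + 2 : ℕ) : ZMod n) := by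
          rw [h, hmid]; push_cast; ring
        have h2 : v (i, 2) = ((3 * (i : ℕ) + 2 : ℕ) : ZMod n) := by simp [hv]
        rw [h2, ← hthis]; exact hu'
  -- the projection to the triples
  set π : (ZMod n → Bool) → (Fin m → Bool × Bool × Bool) :=
    fun f i => (f (v (i, 0)), f (v (i, 1)), f (v (i, 2))) with hπ
  set t : Finset (Fin m → Bool × Bool × Bool) :=
    Fintype.piFinset (fun _ => Finset.univ.filter (fun b => b ≠ (false, false, false)))
    with ht
  have htcard : t.card = 7 ^ m := by
    rw [ht, Fintype.card_piFinset]
    have : (Finset.univ.filter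
        (fun b : Bool × Bool × Bool => b ≠ (false, false, false))).card = 7 := by decide
    simp [this]
  have hmaps : ∀ f ∈ E, π f ∈ t := by
    intro f hf
    rw [hE, Finset.mem_filter] at hf
    rw [ht, Fintype.mem_piFinset]
    intro i
    rw [Finset.mem_filter]
    refine ⟨Finset.mem_univ _, ?_⟩
    intro hcon
    rw [hπ] at hcon
    simp only [Prod.mk.injEq] at hcon
    rcases hf.2 i with h | h | h <;> simp_all
  -- the image of the triples
  set T : Finset (ZMod n) := Finset.image v Finset.univ with hT
  have hTcard : T.card = m * 3 := by
    rw [hT, Finset.card_image_of_injective _ hvinj, Finset.card_univ, Fintype.card_prod,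
      Fintype.card_fin, Fintype.card_fin]
  have hTc : Tᶜ.card = n - 3 * m := by
    rw [Finset.card_compl, hTcard]
    have : Fintype.card (ZMod n) = n := ZMod.card n
    omega
  -- each fiber of π has at most 2^(n - 3m) elements
  have hfiber : ∀ b ∈ t, (E.filter (fun f => π f = b)).card ≤ 2 ^ (n - 3 * m) := by
    intro b _
    have hinj : Set.InjOn (fun (f : ZMod n → Bool) (x : {x // x ∈ Tᶜ}) => f x.1)
        (E.filter (fun f => π f = b)) := by
      intro f hf g hg hfg
      rw [Finset.mem_coe, Finset.mem_filter] at hf hg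
      funext x
      by_cases hx : x ∈ T
      · rw [hT, Finset.mem_image] at hx
        obtain ⟨p, _, rfl⟩ := hx
        have h1 : π f p.1 = π g p.1 := by rw [hf.2, hg.2]
        rw [hπ] at h1
        simp only [Prod.mk.injEq] at h1
        obtain ⟨q1, q2⟩ := p
        fin_cases q2
        · exact h1.1
        · exact h1.2.1
        · exact h1.2.2
      · have := congrFun hfg ⟨x, Finset.mem_compl.2 hx⟩
        exact this
    have := Finset.card_le_card_of_injOn _ (fun a _ => Finset.mem_univ _) hinj
    calc (E.filter (fun f => π f = b)).card
        ≤ (Finset.univ : Finset ({x // x ∈ Tᶜ} → Bool)).card := this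
      _ = 2 ^ (n - 3 * m) := by
          rw [Finset.card_univ, Fintype.card_fun, Fintype.card_coe, hTc]
          simp
  have hEcard : E.card ≤ 2 ^ (n - 3 * m) * 7 ^ m := by
    rw [← htcard]
    exact Finset.card_le_mul_card_image_of_maps_to hmaps _ hfiber
  have hDcard : D.card ≤ 2 ^ (n - 3 * m) * 7 ^ m :=
    le_trans (Finset.card_le_card hDE) hEcard
  -- translate ncard to D.card
  have hncard : {f : ZMod n → Bool |
      IsDominating n (Finset.univ.filter (fun w => f w = true))}.ncard = D.card := by
    rw [Set.ncard_eq_toFinset_card']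
    congr 1
    ext f
    simp [hD]
  rw [hncard]
  -- final real arithmetic
  rw [div_le_iff₀ (by positivity)]
  have h2n : (2 : ℝ) ^ n = 2 ^ (3 * m) * 2 ^ (n - 3 * m) := by
    rw [← pow_add]
    congr 1
    exact (Nat.add_sub_cancel' hmn).symm
  have hkey : ((7 : ℝ) / 8) ^ m * 2 ^ n = 2 ^ (n - 3 * m) * 7 ^ m := by
    rw [div_pow, h2n]
    have h8 : (8 : ℝ) ^ m = 2 ^ (3 * m) := by
      rw [pow_mul]; norm_num
    rw [h8]
    field_simp
  rw [hkey]
  have hc : ((D.card : ℕ) : ℝ) ≤ ((2 ^ (n - 3 * m) * 7 ^ m : ℕ) : ℝ) := Nat.cast_le.2 hDcard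
  push_cast at hc
  exact hc
end

section
/- In the n×n square grid graph B_n with unit conductances, the effective resistance between corner (1,1) and corner (n,n) satisfies log(n)/2 ≤ R(a ↔ z) ≤ 2·log(n). -/
/-!
Lower bound (Nash-Williams): for `k < n - 1` the edges from level `k` to level `k + 1` of
`x ↦ x.1 + x.2` form a cut of at most `2 (k + 1)` edges between the corners. A unit flow crosses
each cut, so by Cauchy–Schwarz its energy is at least `∑_{k < n - 1} 1 / (2 (k + 1)) = H_{n-1} / 2`,
and `log n ≤ H_{n-1}`.

Upper bound (Thomson): below the antidiagonal, route the flow as a Pólya urn: the vertex `(a, b)`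
receives `1 / (a + b + 1)` and passes it on to `(a, b + 1)` and `(a + 1, b)` in the proportions
`(b + 1) : (a + 1)`; above the antidiagonal, use the mirror image of this flow. Its energy is
`(2/3) (H_{n-1} + H_n - 1) ≤ 2 log n`.
-/

open Finset

/-- `θ` is a unit flow from `s` to `t` on the graph `G`: it is antisymmetric,
supported on edges, has zero divergence away from `s` and `t`, and has strength 1. -/
def IsUnitFlow {V : Type*} [Fintype V] (G : SimpleGraph V) (s t : V)
    (θ : V → V → ℝ) : Prop :=
  (∀ x y, θ x y = - θ y x) ∧
  (∀ x y, ¬ G.Adj x y → θ x y = 0) ∧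
  (∀ x, x ≠ s → x ≠ t → ∑ y, θ x y = 0) ∧
  (∑ y, θ s y = 1)

/-- The energy of a flow `θ` with respect to edge resistances `r`:
`Σ_e θ(e)² r(e)` (each edge counted once, hence the factor `1/2` over ordered pairs). -/
noncomputable def energy {V : Type*} [Fintype V] (r : V → V → ℝ) (θ : V → V → ℝ) : ℝ :=
  (1 / 2) * ∑ x, ∑ y, θ x y ^ 2 * r x y

/-- The effective resistance between `s` and `t` (Thomson's principle): the infimum
of the energy over all unit flows from `s` to `t`. -/
noncomputable def effRes {V : Type*} [Fintype V] (G : SimpleGraph V)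
    (r : V → V → ℝ) (s t : V) : ℝ :=
  sInf {E : ℝ | ∃ θ : V → V → ℝ, IsUnitFlow G s t θ ∧ E = energy r θ}

/-- One-directional step relation for the square grid: vertices at unit Euclidean
distance. -/
def sqStep {n : ℕ} (a b : Fin n × Fin n) : Prop :=
  (a.1 = b.1 ∧ a.2.val + 1 = b.2.val) ∨ (a.2 = b.2 ∧ a.1.val + 1 = b.1.val)

/-- The `n × n` square grid graph `B_n` (vertices indexed by `Fin n × Fin n`,
corresponding to `{1,…,n}²`), adjacent at unit Euclidean distance. -/
def SqGrid (n : ℕ) : SimpleGraph (Fin n × Fin n) :=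
  SimpleGraph.fromRel sqStep

section UnitFlow

variable {V : Type*} {θ : V → V → ℝ}

lemma sum_sum_eq_zero_of_antisymm (hθ : ∀ x y, θ x y = -θ y x) (A : Finset V) :
    ∑ x ∈ A, ∑ y ∈ A, θ x y = 0 := by
  have h : ∑ x ∈ A, ∑ y ∈ A, θ x y = ∑ y ∈ A, ∑ x ∈ A, -θ y x :=
    sum_comm.trans (sum_congr rfl fun y _ => sum_congr rfl fun x _ => hθ x y)
  simp only [sum_neg_distrib] at h
  linarith

variable [Fintype V] {G : SimpleGraph V} {s t : V}

lemma not_isUnitFlow_self (G : SimpleGraph V) (s : V) (θ : V → V → ℝ) :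
    ¬ IsUnitFlow G s s θ := by
  rintro ⟨hanti, -, hdiv, hstr⟩
  have h := sum_sum_eq_zero_of_antisymm hanti univ
  rw [Fintype.sum_eq_single s fun x hxs => hdiv x hxs hxs, hstr] at h
  exact one_ne_zero h

lemma IsUnitFlow.sum_compl_eq_one [DecidableEq V] (hθ : IsUnitFlow G s t θ) {A : Finset V}
    (hs : s ∈ A) (ht : t ∉ A) : ∑ x ∈ A, ∑ y ∈ Aᶜ, θ x y = 1 := by
  obtain ⟨hanti, -, hdiv, hstr⟩ := hθ
  have hout : ∑ x ∈ A, ∑ y, θ x y = 1 := by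
    rwa [sum_eq_single_of_mem s hs fun x hx hxs => hdiv x hxs (ne_of_mem_of_not_mem hx ht)]
  simp_rw [← sum_add_sum_compl A (θ _), sum_add_distrib,
    sum_sum_eq_zero_of_antisymm hanti, zero_add] at hout
  exact hout

lemma energy_nonneg {r : V → V → ℝ} (hr : ∀ x y, 0 ≤ r x y) (θ : V → V → ℝ) :
    0 ≤ energy r θ :=
  mul_nonneg (by norm_num) <| sum_nonneg fun x _ => sum_nonneg fun y _ =>
    mul_nonneg (sq_nonneg _) (hr x y)

lemma effRes_le_energy {r : V → V → ℝ} (hr : ∀ x y, 0 ≤ r x y) (hθ : IsUnitFlow G s t θ) :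
    effRes G r s t ≤ energy r θ :=
  csInf_le ⟨0, by rintro _ ⟨θ', -, rfl⟩; exact energy_nonneg hr θ'⟩ ⟨θ, hθ, rfl⟩

lemma le_effRes {r : V → V → ℝ} {c : ℝ} (hθ : IsUnitFlow G s t θ)
    (h : ∀ θ', IsUnitFlow G s t θ' → c ≤ energy r θ') : c ≤ effRes G r s t :=
  le_csInf ⟨_, θ, hθ, rfl⟩ <| by rintro _ ⟨θ', hθ', rfl⟩; exact h θ' hθ'

lemma effRes_self (G : SimpleGraph V) (r : V → V → ℝ) (s : V) : effRes G r s s = 0 := by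
  have : {E : ℝ | ∃ θ, IsUnitFlow G s s θ ∧ E = energy r θ} = ∅ :=
    Set.eq_empty_of_forall_notMem fun _ ⟨θ, hθ, _⟩ => not_isUnitFlow_self G s θ hθ
  rw [effRes, this, Real.sInf_empty]

lemma energy_sub_swap {f : V → V → ℝ} (hf : ∀ x y, f x y * f y x = 0) :
    energy (fun _ _ => 1) (fun x y => f x y - f y x) = ∑ x, ∑ y, f x y ^ 2 := by
  have hsq : ∀ x y, (f x y - f y x) ^ 2 * 1 = f x y ^ 2 + f y x ^ 2 := fun x y => by
    linear_combination (-2 : ℝ) * hf x y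
  simp only [energy, hsq, sum_add_distrib]
  rw [sum_comm (f := fun x y => f y x ^ 2)]
  ring

end UnitFlow

lemma inv_le_sum_sq_of_sum_eq_one {ι : Type*} {S : Finset ι} {f : ι → ℝ} {c : ℝ}
    (hf : ∑ i ∈ S, f i = 1) (hc : (#S : ℝ) ≤ c) : c⁻¹ ≤ ∑ i ∈ S, f i ^ 2 := by
  have hcs := sq_sum_le_card_mul_sum_sq (s := S) (f := f)
  rw [hf, one_pow] at hcs
  have hpos : 0 < c := by
    have : S.Nonempty := nonempty_of_sum_ne_zero (by rw [hf]; exact one_ne_zero)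
    exact lt_of_lt_of_le (by exact_mod_cast this.card_pos) hc
  rw [inv_le_iff_one_le_mul₀ hpos, mul_comm]
  exact hcs.trans (mul_le_mul_of_nonneg_right hc (sum_nonneg fun i _ => sq_nonneg _))

section LevelCut

variable {V : Type*} [Fintype V] {G : SimpleGraph V} {s t : V} {θ : V → V → ℝ}

open Classical in
noncomputable def levelCut (G : SimpleGraph V) (ℓ : V → ℕ) (k : ℕ) : Finset (V × V) :=
  {p | G.Adj p.1 p.2 ∧ ℓ p.1 = k ∧ ℓ p.2 = k + 1}

lemma mem_levelCut {ℓ : V → ℕ} {k : ℕ} {p : V × V} :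
    p ∈ levelCut G ℓ k ↔ G.Adj p.1 p.2 ∧ ℓ p.1 = k ∧ ℓ p.2 = k + 1 := by
  simp [levelCut]

lemma IsUnitFlow.sum_levelCut_eq_one (hθ : IsUnitFlow G s t θ) {ℓ : V → ℕ}
    (hℓ : ∀ x y, G.Adj x y → ℓ y ≤ ℓ x + 1) {k : ℕ} (hs : ℓ s ≤ k) (ht : k < ℓ t) :
    ∑ p ∈ levelCut G ℓ k, θ p.1 p.2 = 1 := by
  classical
  set A : Finset V := {x | ℓ x ≤ k}
  have hcut := hθ.sum_compl_eq_one (A := A) (by simpa [A]) (by simpa [A])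
  rw [← sum_product' (f := θ)] at hcut
  rw [← hcut]
  refine sum_subset (fun p hp => ?_) fun p hp hpc => hθ.2.1 _ _ fun hadj => hpc ?_
  · obtain ⟨hadj, h1, h2⟩ := mem_levelCut.mp hp
    simp [A, h1, h2]
  · simp only [A, mem_product, mem_compl, mem_filter, mem_univ, true_and, not_le] at hp
    have := hℓ _ _ hadj
    exact mem_levelCut.mpr ⟨hadj, by omega, by omega⟩

lemma sum_sq_lt_le_energy (hθ : ∀ x y, θ x y = -θ y x) (ℓ : V → ℕ) :
    ∑ p : V × V, (if ℓ p.1 < ℓ p.2 then θ p.1 p.2 ^ 2 else 0) ≤ energy (fun _ _ => 1) θ := by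
  have hswap : ∑ p : V × V, (if ℓ p.2 < ℓ p.1 then θ p.1 p.2 ^ 2 else 0)
      = ∑ p : V × V, (if ℓ p.1 < ℓ p.2 then θ p.1 p.2 ^ 2 else 0) :=
    Fintype.sum_equiv (Equiv.prodComm V V) _ _ fun p => by
      simp only [Equiv.prodComm_apply, Prod.fst_swap, Prod.snd_swap]
      rw [hθ p.1 p.2, neg_sq]
      rfl
  have hsplit : ∀ p : V × V, (if ℓ p.1 < ℓ p.2 then θ p.1 p.2 ^ 2 else 0)
      + (if ℓ p.2 < ℓ p.1 then θ p.1 p.2 ^ 2 else 0) ≤ θ p.1 p.2 ^ 2 := fun p => by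
    split_ifs <;> first | omega | nlinarith [sq_nonneg (θ p.1 p.2)]
  have htot := sum_le_sum fun p (_ : p ∈ univ) => hsplit p
  rw [sum_add_distrib, hswap] at htot
  rw [energy]
  simp only [mul_one]
  rw [← Fintype.sum_prod_type' (fun x y => θ x y ^ 2)]
  linarith

/-- The Nash-Williams inequality for the cuts between consecutive levels of `ℓ`. -/
theorem IsUnitFlow.sum_inv_le_energy (hθ : IsUnitFlow G s t θ) (ℓ : V → ℕ)
    (hℓ : ∀ x y, G.Adj x y → ℓ y ≤ ℓ x + 1) {c : ℕ → ℝ}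
    (hc : ∀ k, (#(levelCut G ℓ k) : ℝ) ≤ c k) :
    ∑ k ∈ Ico (ℓ s) (ℓ t), (c k)⁻¹ ≤ energy (fun _ _ => 1) θ := by
  classical
  have hdisj : (Ico (ℓ s) (ℓ t) : Set ℕ).PairwiseDisjoint (levelCut G ℓ) :=
    fun a _ b _ hab => disjoint_left.mpr fun p hpa hpb =>
      hab ((mem_levelCut.mp hpa).2.1.symm.trans (mem_levelCut.mp hpb).2.1)
  calc ∑ k ∈ Ico (ℓ s) (ℓ t), (c k)⁻¹
      ≤ ∑ k ∈ Ico (ℓ s) (ℓ t), ∑ p ∈ levelCut G ℓ k, θ p.1 p.2 ^ 2 :=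
        sum_le_sum fun k hk => inv_le_sum_sq_of_sum_eq_one
          (hθ.sum_levelCut_eq_one hℓ (mem_Ico.mp hk).1 (mem_Ico.mp hk).2) (hc k)
    _ = ∑ p ∈ (Ico (ℓ s) (ℓ t)).biUnion (levelCut G ℓ), θ p.1 p.2 ^ 2 :=
        (sum_biUnion hdisj).symm
    _ ≤ ∑ p : V × V, (if ℓ p.1 < ℓ p.2 then θ p.1 p.2 ^ 2 else 0) := by
        rw [← sum_filter]
        refine sum_le_sum_of_subset_of_nonneg (fun p hp => ?_) fun _ _ _ => sq_nonneg _
        obtain ⟨k, -, hpk⟩ := mem_biUnion.mp hp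
        obtain ⟨-, h1, h2⟩ := mem_levelCut.mp hpk
        simp [h1, h2]
    _ ≤ energy (fun _ _ => 1) θ := sum_sq_lt_le_energy hθ.1 ℓ

end LevelCut

section GridLevel

variable {n : ℕ}

def gridLevel (x : Fin n × Fin n) : ℕ := x.1 + x.2

lemma SqGrid.adj_iff_val {x y : Fin n × Fin n} :
    (SqGrid n).Adj x y ↔
      (x.1.val = y.1.val ∧ (x.2.val + 1 = y.2.val ∨ y.2.val + 1 = x.2.val)) ∨
        (x.2.val = y.2.val ∧ (x.1.val + 1 = y.1.val ∨ y.1.val + 1 = x.1.val)) := by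
  simp only [SqGrid, SimpleGraph.fromRel_adj, sqStep, ne_eq, Prod.ext_iff, Fin.ext_iff]
  omega

lemma SqGrid.gridLevel_le_of_adj {x y : Fin n × Fin n} (h : (SqGrid n).Adj x y) :
    gridLevel y ≤ gridLevel x + 1 := by
  rw [SqGrid.adj_iff_val] at h
  simp only [gridLevel]
  omega

lemma card_levelCut_sqGrid_le (k : ℕ) : #(levelCut (SqGrid n) gridLevel k) ≤ 2 * (k + 1) := by
  calc #(levelCut (SqGrid n) gridLevel k)
      ≤ #(range (k + 1) ×ˢ range 2) := by
        refine card_le_card_of_injOn (fun p => (p.1.1.val, p.2.1.val - p.1.1.val))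
          (fun p hp => ?_) fun p hp q hq hpq => ?_
        · obtain ⟨hadj, h1, h2⟩ := mem_levelCut.mp hp
          rw [SqGrid.adj_iff_val] at hadj
          simp only [gridLevel] at h1 h2
          simp only [coe_product, coe_range, Set.mem_prod, Set.mem_Iio]
          omega
        · obtain ⟨hadj, h1, h2⟩ := mem_levelCut.mp hp
          obtain ⟨hadj', h1', h2'⟩ := mem_levelCut.mp hq
          rw [SqGrid.adj_iff_val] at hadj hadj'
          simp only [gridLevel] at h1 h2 h1' h2'
          simp only [Prod.mk.injEq] at hpq
          simp only [Prod.ext_iff, Fin.ext_iff]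
          omega
    _ = 2 * (k + 1) := by simp [mul_comm]

lemma sqStep.gridLevel_eq {n : ℕ} {x y : Fin n × Fin n} (h : sqStep x y) :
    gridLevel y = gridLevel x + 1 := by
  rcases h with ⟨h1, h2⟩ | ⟨h1, h2⟩ <;> simp only [gridLevel, h1] <;> omega

end GridLevel

lemma harmonic_cast_eq_sum (n : ℕ) : (harmonic n : ℝ) = ∑ k ∈ range n, ((k : ℝ) + 1)⁻¹ := by
  simp [harmonic]

lemma harmonic_div_two_le_energy {m : ℕ}
    {θ : Fin (m + 1) × Fin (m + 1) → Fin (m + 1) × Fin (m + 1) → ℝ}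
    (hθ : IsUnitFlow (SqGrid (m + 1)) 0 (Fin.last m, Fin.last m) θ) :
    (harmonic m : ℝ) / 2 ≤ energy (fun _ _ => 1) θ := by
  have h := hθ.sum_inv_le_energy gridLevel (fun _ _ => SqGrid.gridLevel_le_of_adj)
    (c := fun k => 2 * ((k : ℝ) + 1)) fun k => by exact_mod_cast card_levelCut_sqGrid_le k
  have hℓs : gridLevel (0 : Fin (m + 1) × Fin (m + 1)) = 0 := rfl
  have hℓt : gridLevel (Fin.last m, Fin.last m) = 2 * m := by simp [gridLevel]; ring
  rw [hℓs, hℓt] at h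
  calc (harmonic m : ℝ) / 2 = ∑ k ∈ range m, (2 * ((k : ℝ) + 1))⁻¹ := by
        rw [harmonic_cast_eq_sum, sum_div]; simp [mul_comm, div_eq_mul_inv]
    _ ≤ ∑ k ∈ Ico 0 (2 * m), (2 * ((k : ℝ) + 1))⁻¹ :=
        sum_le_sum_of_subset_of_nonneg (fun k hk => by simp at hk ⊢; omega)
          fun _ _ _ => by positivity
    _ ≤ energy (fun _ _ => 1) θ := h

/-- The Pólya urn flow out of the origin of `ℕ × ℕ`: the flow into `(a, b)` along the edge
from `(a, b - 1)`. -/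
noncomputable def polyaFlow (a b : ℕ) : ℝ := b / ((a + b) * (a + b + 1))

lemma polyaFlow_zero_right (a : ℕ) : polyaFlow a 0 = 0 := by simp [polyaFlow]

lemma polyaFlow_add_polyaFlow_swap {a b : ℕ} (h : a + b ≠ 0) :
    polyaFlow a b + polyaFlow b a = ((a : ℝ) + b + 1)⁻¹ := by
  have hab : (a : ℝ) + b ≠ 0 := by exact_mod_cast h
  simp only [polyaFlow, add_comm (b : ℝ) a, ← add_div]
  field_simp

lemma polyaFlow_succ_add_polyaFlow_succ (a b : ℕ) :
    polyaFlow a (b + 1) + polyaFlow b (a + 1) = ((a : ℝ) + b + 1)⁻¹ := by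
  have h : (a : ℝ) + b + 1 ≠ 0 := by positivity
  have h' : (a : ℝ) + b + 2 ≠ 0 := by positivity
  simp only [polyaFlow]
  push_cast
  rw [show (b : ℝ) + (a + 1) = a + (b + 1) by ring, ← add_div]
  field_simp
  ring

lemma polyaFlow_divergence (a b : ℕ) :
    polyaFlow a (b + 1) + polyaFlow b (a + 1) - (polyaFlow a b + polyaFlow b a)
      = if a = 0 ∧ b = 0 then 1 else 0 := by
  rw [polyaFlow_succ_add_polyaFlow_succ]
  split_ifs with h
  · obtain ⟨rfl, rfl⟩ := h
    simp [polyaFlow]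
  · rw [polyaFlow_add_polyaFlow_swap (by omega), sub_self]

lemma sum_range_succ_sq (n : ℕ) :
    ∑ j ∈ range (n + 1), (j : ℝ) ^ 2 = n * (n + 1) * (2 * n + 1) / 6 := by
  induction n with
  | zero => simp
  | succ n ih => rw [sum_range_succ, ih]; push_cast; ring

lemma sum_sq_polyaFlow_antidiagonal (k : ℕ) :
    ∑ j ∈ range (k + 2), polyaFlow j (k + 1 - j) ^ 2 = (((k : ℝ) + 1)⁻¹ + ((k : ℝ) + 2)⁻¹) / 6 := by
  have hterm : ∀ j ∈ range (k + 2), polyaFlow j (k + 1 - j) ^ 2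
      = ((k + 2 - 1 - j : ℕ) : ℝ) ^ 2 / (((k : ℝ) + 1) * (k + 2)) ^ 2 := fun j hj => by
    have hj : j ≤ k + 1 := Nat.lt_succ_iff.mp (mem_range.mp hj)
    rw [polyaFlow, ← Nat.cast_add, Nat.add_sub_cancel' hj, div_pow]
    push_cast
    ring_nf
  rw [sum_congr rfl hterm, ← sum_div, sum_range_reflect (fun j => (j : ℝ) ^ 2) (k + 2),
    sum_range_succ_sq]
  have h1 : (k : ℝ) + 1 ≠ 0 := by positivity
  have h2 : (k : ℝ) + 2 ≠ 0 := by positivity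
  push_cast
  field_simp
  ring

lemma sum_sq_polyaFlow_triangle (m : ℕ) :
    ∑ i ∈ range (m + 1), ∑ j ∈ range (m + 1 - i), polyaFlow i j ^ 2
      = (harmonic m + harmonic (m + 1) - 1) / 6 := by
  rw [← sum_range_diag_flip (m + 1) (fun i j => polyaFlow i j ^ 2), sum_range_succ']
  simp only [show ∀ k : ℕ, k + 1 + 1 = k + 2 from fun _ => rfl, sum_sq_polyaFlow_antidiagonal]
  simp only [zero_add, range_one, sum_singleton, Nat.sub_zero, polyaFlow_zero_right]
  rw [harmonic_cast_eq_sum, harmonic_cast_eq_sum, sum_range_succ', ← sum_div, sum_add_distrib]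
  push_cast
  ring_nf

/-- The flow on the vertical edge from `(i, j - 1)` to `(i, j)` of the grid `{0, …, m}²`: the
Pólya flow from `(0, 0)` below the antidiagonal `i + j = m`, and the mirror image of the Pólya
flow into `(m, m)` above it. -/
noncomputable def gridVert (m i j : ℕ) : ℝ :=
  if i + j ≤ m then polyaFlow i j else polyaFlow (m - i) (m + 1 - j)

lemma gridVert_zero_right {m i : ℕ} (hi : i ≤ m) : gridVert m i 0 = 0 := by
  rw [gridVert, if_pos (by omega), polyaFlow_zero_right]

lemma gridVert_top (m i : ℕ) : gridVert m i (m + 1) = 0 := by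
  rw [gridVert, if_neg (by omega), Nat.sub_self, polyaFlow_zero_right]

lemma gridVert_divergence {m i j : ℕ} (hi : i ≤ m) (hj : j ≤ m) :
    gridVert m i (j + 1) + gridVert m j (i + 1) - (gridVert m i j + gridVert m j i)
      = (if i = 0 ∧ j = 0 then 1 else 0) - (if i = m ∧ j = m then 1 else 0) := by
  unfold gridVert
  rcases lt_trichotomy (i + j) m with h | h | h
  · rw [if_pos (by omega), if_pos (by omega), if_pos (by omega), if_pos (by omega),
      polyaFlow_divergence, if_neg (by omega : ¬ (i = m ∧ j = m)), sub_zero]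
  · rw [if_neg (by omega), if_neg (by omega), if_pos (by omega), if_pos (by omega),
      show m - i = j by omega, show m - j = i by omega, show m + 1 - (j + 1) = i by omega,
      show m + 1 - (i + 1) = j by omega]
    split_ifs <;> first | (exfalso; omega) | ring
  · rw [if_neg (by omega), if_neg (by omega), if_neg (by omega), if_neg (by omega),
      show m + 1 - (j + 1) = m - j by omega, show m + 1 - (i + 1) = m - i by omega,
      show m + 1 - j = m - j + 1 by omega, show m + 1 - i = m - i + 1 by omega]
    have key := polyaFlow_divergence (m - i) (m - j)
    simp only [show (m - i = 0 ∧ m - j = 0) ↔ (i = m ∧ j = m) by omega] at key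
    rw [if_neg (by omega : ¬ (i = 0 ∧ j = 0))]
    linarith

lemma sum_sq_gridVert_row {m i : ℕ} (hi : i ≤ m) :
    ∑ j ∈ range (m + 1), gridVert m i (j + 1) ^ 2
      = ∑ j ∈ range (m + 1 - i), polyaFlow i j ^ 2
        + ∑ j ∈ range (i + 1), polyaFlow (m - i) j ^ 2 := by
  have hshift : ∑ j ∈ range (m + 1), gridVert m i (j + 1) ^ 2
      = ∑ j ∈ range (m + 2), gridVert m i j ^ 2 := by
    rw [sum_range_succ' (fun j => gridVert m i j ^ 2), gridVert_zero_right hi,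
      zero_pow two_ne_zero, add_zero]
  rw [hshift, show m + 2 = (m + 1 - i) + (i + 1) by omega, sum_range_add,
    ← sum_range_reflect _ (i + 1)]
  congr 1
  · refine sum_congr rfl fun j hj => ?_
    rw [gridVert, if_pos (by simp at hj; omega)]
  · refine sum_congr rfl fun j hj => ?_
    simp only [mem_range] at hj
    rw [gridVert, if_neg (by omega), show m + 1 - (m + 1 - i + (i + 1 - 1 - j)) = j by omega]

lemma sum_sq_gridVert (m : ℕ) :
    ∑ i ∈ range (m + 1), ∑ j ∈ range (m + 1), gridVert m i (j + 1) ^ 2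
      = 2 * ∑ i ∈ range (m + 1), ∑ j ∈ range (m + 1 - i), polyaFlow i j ^ 2 := by
  rw [sum_congr rfl fun i hi => sum_sq_gridVert_row (Nat.lt_succ_iff.mp (mem_range.mp hi)),
    sum_add_distrib, two_mul]
  congr 1
  rw [← sum_range_reflect _ (m + 1)]
  refine sum_congr rfl fun i hi => ?_
  simp only [mem_range] at hi
  rw [show m + 1 - 1 - i + 1 = m + 1 - i by omega, show m - (m + 1 - 1 - i) = i by omega]

section GridFlow

variable {m : ℕ}

lemma val_add_one_of_gridVert_ne_zero {i : ℕ} {a : Fin (m + 1)}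
    (h : gridVert m i (a + 1) ≠ 0) : ((a + 1 : Fin (m + 1)) : ℕ) = a + 1 := by
  rw [Fin.val_add_one, if_neg]
  rintro rfl
  exact h (by rw [Fin.val_last, gridVert_top])

lemma gridVert_val_sub_one_add_one {i : ℕ} (hi : i ≤ m) (a : Fin (m + 1)) :
    gridVert m i ((a - 1 : Fin (m + 1)) + 1) = gridVert m i a := by
  rw [Fin.coe_sub_one]
  split_ifs with ha
  · rw [gridVert_top, ha, Fin.val_zero, gridVert_zero_right hi]
  · rw [Nat.sub_add_cancel (Nat.one_le_iff_ne_zero.mpr (Fin.val_ne_of_ne ha))]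

/-- Neighbours are found by addition in the torus `Fin (m + 1) × Fin (m + 1)`; its wrap-around
edges carry `gridVert m i (m + 1) = 0`. -/
noncomputable def gridForward (m : ℕ) (x y : Fin (m + 1) × Fin (m + 1)) : ℝ :=
  (if y = x + (0, 1) then gridVert m x.1 (x.2 + 1) else 0) +
    (if y = x + (1, 0) then gridVert m x.2 (x.1 + 1) else 0)

noncomputable def gridFlow (m : ℕ) (x y : Fin (m + 1) × Fin (m + 1)) : ℝ :=
  gridForward m x y - gridForward m y x

lemma sum_gridForward_left (x : Fin (m + 1) × Fin (m + 1)) :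
    ∑ y, gridForward m x y = gridVert m x.1 (x.2 + 1) + gridVert m x.2 (x.1 + 1) := by
  simp [gridForward, sum_add_distrib]

lemma sum_gridForward_right (x : Fin (m + 1) × Fin (m + 1)) :
    ∑ y, gridForward m y x = gridVert m x.1 x.2 + gridVert m x.2 x.1 := by
  simp only [gridForward, eq_comm (a := x), ← eq_sub_iff_add_eq]
  simp [sum_add_distrib, gridVert_val_sub_one_add_one (Fin.is_le _)]

lemma sqStep_of_gridForward_ne_zero {x y : Fin (m + 1) × Fin (m + 1)}
    (h : gridForward m x y ≠ 0) : sqStep x y := by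
  unfold gridForward at h
  by_cases hup : y = x + (0, 1) ∧ gridVert m x.1 (x.2 + 1) ≠ 0
  · obtain ⟨rfl, hv⟩ := hup
    exact Or.inl ⟨by simp, (val_add_one_of_gridVert_ne_zero hv).symm⟩
  by_cases hrt : y = x + (1, 0) ∧ gridVert m x.2 (x.1 + 1) ≠ 0
  · obtain ⟨rfl, hv⟩ := hrt
    exact Or.inr ⟨by simp, (val_add_one_of_gridVert_ne_zero hv).symm⟩
  refine absurd ?_ h
  rw [not_and_not_right] at hup hrt
  rw [ite_eq_right_iff.mpr hup, ite_eq_right_iff.mpr hrt, add_zero]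

lemma gridForward_mul_swap (x y : Fin (m + 1) × Fin (m + 1)) :
    gridForward m x y * gridForward m y x = 0 := by
  by_contra h
  obtain ⟨hxy, hyx⟩ := mul_ne_zero_iff.mp h
  have h1 := (sqStep_of_gridForward_ne_zero hxy).gridLevel_eq
  have h2 := (sqStep_of_gridForward_ne_zero hyx).gridLevel_eq
  omega

lemma sum_gridFlow (x : Fin (m + 1) × Fin (m + 1)) :
    ∑ y, gridFlow m x y
      = (if x = 0 then 1 else 0) - (if x = (Fin.last m, Fin.last m) then 1 else 0) := by
  simp only [gridFlow, sum_sub_distrib, sum_gridForward_left, sum_gridForward_right]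
  rw [gridVert_divergence (Fin.is_le _) (Fin.is_le _)]
  simp only [Prod.ext_iff, Fin.ext_iff, Prod.fst_zero, Prod.snd_zero, Fin.val_zero, Fin.val_last]

theorem isUnitFlow_gridFlow (hm : 0 < m) :
    IsUnitFlow (SqGrid (m + 1)) 0 (Fin.last m, Fin.last m) (gridFlow m) := by
  refine ⟨fun x y => by simp [gridFlow], fun x y hxy => ?_, fun x hs ht => ?_, ?_⟩
  · rw [SqGrid, SimpleGraph.fromRel_adj, not_and_or, not_ne_iff, not_or] at hxy
    rcases hxy with rfl | ⟨hxy, hyx⟩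
    · exact sub_self _
    · rw [gridFlow, not_imp_comm.mp sqStep_of_gridForward_ne_zero hxy,
        not_imp_comm.mp sqStep_of_gridForward_ne_zero hyx, sub_zero]
  · rw [sum_gridFlow, if_neg hs, if_neg ht, sub_zero]
  · rw [sum_gridFlow, if_pos rfl, if_neg, sub_zero]
    simp [Prod.ext_iff, Fin.ext_iff, hm.ne]

lemma sum_sq_gridForward (hm : 0 < m) (x : Fin (m + 1) × Fin (m + 1)) :
    ∑ y, gridForward m x y ^ 2 = gridVert m x.1 (x.2 + 1) ^ 2 + gridVert m x.2 (x.1 + 1) ^ 2 := by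
  have hne : x + (0, 1) ≠ x + (1, 0) := by
    simp [Prod.ext_iff, Fin.ext_iff, hm.ne']
  have hsq : ∀ y, gridForward m x y ^ 2
      = (if y = x + (0, 1) then gridVert m x.1 (x.2 + 1) ^ 2 else 0)
        + (if y = x + (1, 0) then gridVert m x.2 (x.1 + 1) ^ 2 else 0) := fun y => by
    unfold gridForward
    by_cases h1 : y = x + (0, 1)
    · rw [if_pos h1, if_pos h1, if_neg (h1 ▸ hne), if_neg (h1 ▸ hne)]
      ring
    · rw [if_neg h1, if_neg h1]
      split_ifs <;> ring
  simp [hsq, sum_add_distrib]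

theorem energy_gridFlow (hm : 0 < m) :
    energy (fun _ _ => 1) (gridFlow m) = 2 / 3 * (harmonic m + harmonic (m + 1) - 1) := by
  rw [show gridFlow m = fun x y => gridForward m x y - gridForward m y x from rfl,
    energy_sub_swap gridForward_mul_swap]
  simp only [sum_sq_gridForward hm, sum_add_distrib]
  rw [Fintype.sum_equiv (Equiv.prodComm (Fin (m + 1)) (Fin (m + 1)))
    (fun x => gridVert m x.2 (x.1 + 1) ^ 2) (fun x => gridVert m x.1 (x.2 + 1) ^ 2) fun _ => rfl,
    Fintype.sum_prod_type]
  have hrange : ∑ a : Fin (m + 1), ∑ b : Fin (m + 1), gridVert m a (b + 1) ^ 2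
      = ∑ i ∈ range (m + 1), ∑ j ∈ range (m + 1), gridVert m i (j + 1) ^ 2 := by
    rw [← Fin.sum_univ_eq_sum_range (fun i => ∑ j ∈ range (m + 1), gridVert m i (j + 1) ^ 2)]
    exact sum_congr rfl fun a _ => Fin.sum_univ_eq_sum_range (fun j => gridVert m a (j + 1) ^ 2) _
  rw [hrange, sum_sq_gridVert, sum_sq_polyaFlow_triangle]
  ring

end GridFlow

lemma two_thirds_harmonic_le_two_log (m : ℕ) :
    2 / 3 * (harmonic m + harmonic (m + 1) - 1 : ℝ) ≤ 2 * Real.log (m + 1) := by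
  have hH := harmonic_le_one_add_log (m + 1)
  have hlog := Real.one_sub_inv_le_log_of_pos (x := (m : ℝ) + 1) (by positivity)
  rw [harmonic_succ] at hH ⊢
  push_cast at hH ⊢
  linarith

/-- In the `n × n` square grid with unit conductances, the effective resistance between
opposite corners `a = (1,1)` and `z = (n,n)` satisfies
`log(n)/2 ≤ R(a ↔ z) ≤ 2 log(n)`. -/
theorem square_grid_corner_resistance (n : ℕ) (hn : 1 ≤ n) :
    Real.log n / 2 ≤
        effRes (SqGrid n) (fun _ _ => (1 : ℝ)) (⟨0, hn⟩, ⟨0, hn⟩)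
          (⟨n - 1, by omega⟩, ⟨n - 1, by omega⟩) ∧
      effRes (SqGrid n) (fun _ _ => (1 : ℝ)) (⟨0, hn⟩, ⟨0, hn⟩)
          (⟨n - 1, by omega⟩, ⟨n - 1, by omega⟩) ≤ 2 * Real.log n := by
  obtain ⟨m, rfl⟩ : ∃ m, n = m + 1 := ⟨n - 1, by omega⟩
  have hs : ((⟨0, hn⟩, ⟨0, hn⟩) : Fin (m + 1) × Fin (m + 1)) = 0 := rfl
  have ht : ((⟨m + 1 - 1, by omega⟩, ⟨m + 1 - 1, by omega⟩) : Fin (m + 1) × Fin (m + 1))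
      = (Fin.last m, Fin.last m) := rfl
  rw [hs, ht]
  rcases Nat.eq_zero_or_pos m with rfl | hm
  · rw [show (Fin.last 0, Fin.last 0) = (0 : Fin 1 × Fin 1) from rfl, effRes_self]
    simp
  refine ⟨le_effRes (isUnitFlow_gridFlow hm) fun θ hθ => ?_, ?_⟩
  · exact (div_le_div_of_nonneg_right (log_add_one_le_harmonic m) zero_le_two).trans
      (harmonic_div_two_le_energy hθ)
  · calc effRes (SqGrid (m + 1)) (fun _ _ => 1) 0 (Fin.last m, Fin.last m)
        ≤ energy (fun _ _ => 1) (gridFlow m) :=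
          effRes_le_energy (fun _ _ => zero_le_one) (isUnitFlow_gridFlow hm)
      _ = 2 / 3 * (harmonic m + harmonic (m + 1) - 1) := energy_gridFlow hm
      _ ≤ 2 * Real.log ↑(m + 1) := by exact_mod_cast two_thirds_harmonic_le_two_log m
end

section
/- Let D be a dominating set of C_n with adjacency graph A(D) = (V, E, w), where vertices of A(D) correspond to vertices of D and w assigns each vertex its gap distance (the distance between a vertex of D and its clockwise neighbor in D, taking values in {1,2,3}). Then D is not minimal if and only if there exists an edge {u,v} ∈ E with w(u) + w(v) ≤ 3. -/
/-- The clockwise gap of `v ∈ D`: the distance from `v` to its clockwise neighbor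
in `D`, i.e., the least `k ≥ 1` with `v + k ∈ D`. This is a vertex weight of the
adjacency graph of `D`. -/
noncomputable def gapCW (n : ℕ) (D : Finset (ZMod n)) (v : ZMod n) : ℕ :=
  sInf {k : ℕ | 1 ≤ k ∧ v + (k : ZMod n) ∈ D}

/-- The counterclockwise gap of `v ∈ D`: the distance from its counterclockwise
neighbor in `D` to `v`, i.e., the least `k ≥ 1` with `v - k ∈ D`. -/
noncomputable def gapCCW (n : ℕ) (D : Finset (ZMod n)) (v : ZMod n) : ℕ :=
  sInf {k : ℕ | 1 ≤ k ∧ v - (k : ZMod n) ∈ D}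

lemma cycleGraph_adj (n : ℕ) (u w : ZMod n) :
    (cycleGraph n).Adj u w ↔ u ≠ w ∧ (w = u + 1 ∨ u = w + 1) := by
  simp [cycleGraph, SimpleGraph.fromRel_adj]

/-- A dominating set `D` of `C_n` is not minimal iff its adjacency graph has an edge
`{u,v}` with `w(u) + w(v) ≤ 3`; concretely, iff some `v ∈ D` has the sum of its
counterclockwise and clockwise gaps (the two adjacent vertex weights, which share
the vertex `v` of `D`) at most 3. -/
theorem not_minimal_iff_adjacent_weights (n : ℕ) [NeZero n] (hn : 2 ≤ n)
    (D : Finset (ZMod n)) (hD : IsDominating n D) :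
    (∃ D' : Finset (ZMod n), D' ⊂ D ∧ IsDominating n D') ↔
      ∃ v ∈ D, gapCCW n D v + gapCW n D v ≤ 3 := by
  haveI : Fact (1 < n) := ⟨hn⟩
  have hone : (1 : ZMod n) ≠ 0 := one_ne_zero
  constructor
  · rintro ⟨D', hsub, hD'⟩
    obtain ⟨v, hvD, hvD'⟩ : ∃ v ∈ D, v ∉ D' := by
      obtain ⟨hle, hne⟩ := hsub
      by_contra h
      push_neg at h
      exact hne fun x hx => h x hx
    refine ⟨v, hvD, ?_⟩
    have hmemA : ∀ w : ZMod n, w ∈ D' → (w = v - 1 ∨ w = v - 2) →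
        gapCCW n D v ≤ 2 := by
      intro w hw hcase
      rcases hcase with h | h
      · exact le_trans (Nat.sInf_le ⟨le_refl 1, by
          subst h; push_cast; simpa using hsub.1 hw⟩) one_le_two
      · exact Nat.sInf_le ⟨one_le_two, by
          subst h; push_cast; simpa using hsub.1 hw⟩
    have hmemB : ∀ w : ZMod n, w ∈ D' → (w = v + 1 ∨ w = v + 2) →
        gapCW n D v ≤ 2 := by
      intro w hw hcase
      rcases hcase with h | h
      · exact le_trans (Nat.sInf_le ⟨le_refl 1, by
          subst h; push_cast; simpa using hsub.1 hw⟩) one_le_two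
      · exact Nat.sInf_le ⟨one_le_two, by
          subst h; push_cast; simpa using hsub.1 hw⟩
    -- from domination of v : a ≤ 1 or b ≤ 1
    have hmid : gapCCW n D v ≤ 1 ∨ gapCW n D v ≤ 1 := by
      obtain ⟨u, hu, hcase⟩ := hD' v
      rcases hcase with h | h
      · exact absurd (h ▸ hu) hvD'
      · rw [cycleGraph_adj] at h
        obtain ⟨-, h | h⟩ := h
        · left
          refine Nat.sInf_le ⟨le_refl 1, ?_⟩
          push_cast
          have hu' : u = v - 1 := by first | linear_combination h | linear_combination -h
          rw [← hu']; exact hsub.1 hu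
        · right
          refine Nat.sInf_le ⟨le_refl 1, ?_⟩
          push_cast
          rw [← h]; exact hsub.1 hu
    -- from domination of v - 1 : a ≤ 2
    have ha2 : gapCCW n D v ≤ 2 := by
      obtain ⟨u, hu, hcase⟩ := hD' (v - 1)
      rcases hcase with h | h
      · exact hmemA u hu (Or.inl h)
      · rw [cycleGraph_adj] at h
        obtain ⟨-, h | h⟩ := h
        · exact hmemA u hu (Or.inr (by first | linear_combination h | linear_combination -h))
        · exfalso
          have : u = v := by first | linear_combination h | linear_combination -h
          exact hvD' (this ▸ hu)
    -- from domination of v + 1 : b ≤ 2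
    have hb2 : gapCW n D v ≤ 2 := by
      obtain ⟨u, hu, hcase⟩ := hD' (v + 1)
      rcases hcase with h | h
      · exact hmemB u hu (Or.inl h)
      · rw [cycleGraph_adj] at h
        obtain ⟨-, h | h⟩ := h
        · exfalso
          have : u = v := by first | linear_combination h | linear_combination -h
          exact hvD' (this ▸ hu)
        · exact hmemB u hu (Or.inr (by first | linear_combination h | linear_combination -h))
    omega
  · rintro ⟨v, hvD, hsum⟩
    have hAne : {k : ℕ | 1 ≤ k ∧ v - (k : ZMod n) ∈ D}.Nonempty :=
      ⟨n, by omega, by simpa [ZMod.natCast_self] using hvD⟩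
    have hBne : {k : ℕ | 1 ≤ k ∧ v + (k : ZMod n) ∈ D}.Nonempty :=
      ⟨n, by omega, by simpa [ZMod.natCast_self] using hvD⟩
    have haMem : gapCCW n D v ∈ {k : ℕ | 1 ≤ k ∧ v - (k : ZMod n) ∈ D} :=
      Nat.sInf_mem hAne
    have hbMem : gapCW n D v ∈ {k : ℕ | 1 ≤ k ∧ v + (k : ZMod n) ∈ D} :=
      Nat.sInf_mem hBne
    obtain ⟨ha1, haD⟩ := haMem
    obtain ⟨hb1, hbD⟩ := hbMem
    refine ⟨D.erase v, Finset.erase_ssubset hvD, ?_⟩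
    intro w
    obtain ⟨u, hu, hcase⟩ := hD w
    by_cases huv : u = v
    swap
    · exact ⟨u, Finset.mem_erase.mpr ⟨huv, hu⟩, hcase⟩
    subst huv
    -- w ∈ {v - 1, v, v + 1}
    have hw : w = u ∨ w = u + 1 ∨ w = u - 1 := by
      rcases hcase with h | h
      · exact Or.inl h.symm
      · rw [cycleGraph_adj] at h
        obtain ⟨-, h | h⟩ := h
        · exact Or.inr (Or.inl h)
        · exact Or.inr (Or.inr (by first | linear_combination h | linear_combination -h))
    have hcases : (gapCCW n D u = 1 ∧ gapCW n D u = 1) ∨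
        (gapCCW n D u = 1 ∧ gapCW n D u = 2) ∨
        (gapCCW n D u = 2 ∧ gapCW n D u = 1) := by omega
    have hm1 : u - 1 ≠ u := by
      intro h; apply hone; first | linear_combination h | linear_combination -h
    have hp1 : u + 1 ≠ u := by
      intro h; apply hone; first | linear_combination h | linear_combination -h
    rcases hcases with ⟨ha, hb⟩ | ⟨ha, hb⟩ | ⟨ha, hb⟩
    · -- v-1 and v+1 both in D
      rw [ha] at haD; rw [hb] at hbD
      push_cast at haD hbD
      rcases hw with h | h | h
      · exact ⟨u - 1, Finset.mem_erase.mpr ⟨hm1, haD⟩, Or.inr (by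
          rw [cycleGraph_adj]
          exact ⟨fun hh => hone (by first | linear_combination hh + h | linear_combination hh - h | linear_combination -hh + h | linear_combination -hh - h), Or.inl (by
            first | linear_combination h | linear_combination -h)⟩)⟩
      · exact ⟨u + 1, Finset.mem_erase.mpr ⟨hp1, hbD⟩, Or.inl h.symm⟩
      · exact ⟨u - 1, Finset.mem_erase.mpr ⟨hm1, haD⟩, Or.inl h.symm⟩
    · -- v-1 and v+2 in D, v+1 not in D
      rw [ha] at haD; rw [hb] at hbD
      push_cast at haD hbD
      have hp1D : u + 1 ∉ D := by
        intro hmem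
        have : (1 : ℕ) ∈ {k : ℕ | 1 ≤ k ∧ u + (k : ZMod n) ∈ D} :=
          ⟨le_refl 1, by push_cast; exact hmem⟩
        have h1' : gapCW n D u ≤ 1 := Nat.sInf_le this
        omega
      have h2 : (2 : ZMod n) ≠ 0 := by
        intro h
        apply hp1D
        have : u + 1 = u - 1 := by first | linear_combination h | linear_combination -h
        rwa [this]
      have hp2 : u + 2 ≠ u := by
        intro h; apply h2; first | linear_combination h | linear_combination -h
      rcases hw with h | h | h
      · exact ⟨u - 1, Finset.mem_erase.mpr ⟨hm1, haD⟩, Or.inr (by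
          rw [cycleGraph_adj]
          exact ⟨fun hh => hone (by first | linear_combination hh + h | linear_combination hh - h | linear_combination -hh + h | linear_combination -hh - h), Or.inl (by
            first | linear_combination h | linear_combination -h)⟩)⟩
      · exact ⟨u + 2, Finset.mem_erase.mpr ⟨hp2, hbD⟩, Or.inr (by
          rw [cycleGraph_adj]
          exact ⟨fun hh => hone (by first | linear_combination hh + h | linear_combination hh - h | linear_combination -hh + h | linear_combination -hh - h), Or.inr (by
            first | linear_combination h | linear_combination -h)⟩)⟩
      · exact ⟨u - 1, Finset.mem_erase.mpr ⟨hm1, haD⟩, Or.inl h.symm⟩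
    · -- v-2 and v+1 in D, v-1 not in D
      rw [ha] at haD; rw [hb] at hbD
      push_cast at haD hbD
      have hm1D : u - 1 ∉ D := by
        intro hmem
        have : (1 : ℕ) ∈ {k : ℕ | 1 ≤ k ∧ u - (k : ZMod n) ∈ D} :=
          ⟨le_refl 1, by push_cast; exact hmem⟩
        have h1' : gapCCW n D u ≤ 1 := Nat.sInf_le this
        omega
      have h2 : (2 : ZMod n) ≠ 0 := by
        intro h
        apply hm1D
        have : u - 1 = u + 1 := by first | linear_combination h | linear_combination -h
        rwa [this]
      have hm2 : u - 2 ≠ u := by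
        intro h; apply h2; first | linear_combination h | linear_combination -h
      rcases hw with h | h | h
      · exact ⟨u + 1, Finset.mem_erase.mpr ⟨hp1, hbD⟩, Or.inr (by
          rw [cycleGraph_adj]
          exact ⟨fun hh => hone (by first | linear_combination hh + h | linear_combination hh - h | linear_combination -hh + h | linear_combination -hh - h), Or.inr (by
            first | linear_combination h | linear_combination -h)⟩)⟩
      · exact ⟨u + 1, Finset.mem_erase.mpr ⟨hp1, hbD⟩, Or.inl h.symm⟩
      · exact ⟨u - 2, Finset.mem_erase.mpr ⟨hm2, haD⟩, Or.inr (by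
          rw [cycleGraph_adj]
          exact ⟨fun hh => hone (by first | linear_combination hh + h | linear_combination hh - h | linear_combination -hh + h | linear_combination -hh - h), Or.inl (by
            first | linear_combination h | linear_combination -h)⟩)⟩
end

section
/- If r and r' are two resistance assignments on the edges of the same finite connected graph G with r(e) ≤ r'(e) for all e, then for all vertices s, t: R(s ↔ t; r) ≤ R(s ↔ t; r') (Rayleigh's monotonicity law). -/
open Finset

/-- If `r ≤ r'` edgewise (both positive on edges), then the effective resistance is
monotone: `R(s ↔ t; r) ≤ R(s ↔ t; r')` (Rayleigh's monotonicity law). -/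
theorem rayleigh_monotonicity {V : Type*} [Fintype V] (G : SimpleGraph V)
    (hG : G.Connected) (r r' : V → V → ℝ)
    (hrpos : ∀ x y, G.Adj x y → 0 < r x y)
    (hr'pos : ∀ x y, G.Adj x y → 0 < r' x y)
    (hle : ∀ x y, G.Adj x y → r x y ≤ r' x y) (s t : V) :
    effRes G r s t ≤ effRes G r' s t := by
  classical
  set S : Set ℝ := {E : ℝ | ∃ θ : V → V → ℝ, IsUnitFlow G s t θ ∧ E = energy r θ}
  set S' : Set ℝ := {E : ℝ | ∃ θ : V → V → ℝ, IsUnitFlow G s t θ ∧ E = energy r' θ}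
  have hterm : ∀ (θ : V → V → ℝ), IsUnitFlow G s t θ →
      ∀ x y, 0 ≤ θ x y ^ 2 * r x y ∧ θ x y ^ 2 * r x y ≤ θ x y ^ 2 * r' x y := by
    intro θ hθ x y
    by_cases h : G.Adj x y
    · exact ⟨mul_nonneg (sq_nonneg _) (hrpos x y h).le,
        mul_le_mul_of_nonneg_left (hle x y h) (sq_nonneg _)⟩
    · rw [hθ.2.1 x y h]
      simp
  have hener : ∀ (θ : V → V → ℝ), IsUnitFlow G s t θ →
      0 ≤ energy r θ ∧ energy r θ ≤ energy r' θ := by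
    intro θ hθ
    constructor
    · exact mul_nonneg (by norm_num) <| Finset.sum_nonneg fun x _ =>
        Finset.sum_nonneg fun y _ => (hterm θ hθ x y).1
    · exact mul_le_mul_of_nonneg_left
        (Finset.sum_le_sum fun x _ => Finset.sum_le_sum fun y _ => (hterm θ hθ x y).2)
        (by norm_num)
  by_cases hne : S'.Nonempty
  · have hSbdd : BddBelow S := ⟨0, fun E ⟨θ, hθ, hE⟩ => hE ▸ (hener θ hθ).1⟩
    refine le_csInf hne ?_
    rintro E ⟨θ, hθ, rfl⟩
    exact le_trans (csInf_le hSbdd ⟨θ, hθ, rfl⟩) (hener θ hθ).2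
  · rw [Set.not_nonempty_iff_eq_empty] at hne
    have hS : S = ∅ := by
      rw [Set.eq_empty_iff_forall_notMem]
      rintro E ⟨θ, hθ, rfl⟩
      exact Set.eq_empty_iff_forall_notMem.mp hne (energy r' θ) ⟨θ, hθ, rfl⟩
    show sInf S ≤ sInf S'
    rw [hS, hne]
end

section
/- Let D be a dominating set of C_n and suppose u, v, w ∈ D are three distinct vertices contained in an induced path of C_n of length at most 4, with v between u and w. Then the middle vertex v satisfies pn(v, D) = ∅, i.e., v is redundant in D. -/
/-- Closed neighborhood of a vertex. -/
def closedNbhd {V : Type*} (G : SimpleGraph V) (v : V) : Set V :=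
  {x | x = v ∨ G.Adj v x}

/-- Closed neighborhood of a set of vertices. -/
def closedNbhdSet {V : Type*} (G : SimpleGraph V) (S : Set V) : Set V :=
  ⋃ v ∈ S, closedNbhd G v

/-- The `D`-private neighborhood of `v`: `pn(v,D) = N[v] \ N[D \ {v}]`. -/
def pn {V : Type*} (G : SimpleGraph V) (D : Set V) (v : V) : Set V :=
  closedNbhd G v \ closedNbhdSet G (D \ {v})

lemma mem_cns {n : ℕ} (D : Finset (ZMod n)) (v d x : ZMod n)
    (hd : d ∈ D) (hdv : d ≠ v) (h : x = d ∨ (cycleGraph n).Adj d x) :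
    x ∈ closedNbhdSet (cycleGraph n) ((↑D : Set (ZMod n)) \ {v}) := by
  simp only [closedNbhdSet, Set.mem_iUnion, Set.mem_diff, Set.mem_singleton_iff]
  exact ⟨d, ⟨⟨hd, hdv⟩, h⟩⟩

/-- Let `D` be a dominating set of `C_n` and let `u = v - a`, `v`, `w = v + b` be three
distinct vertices of `D` lying on an induced path of `C_n` of length at most 4
(spanning `a + b ≤ 3` edges), with `v` between `u` and `w`. Then the middle vertex `v`
has empty `D`-private neighborhood, i.e., `v` is redundant in `D`. -/
theorem middle_vertex_redundant (n : ℕ) [NeZero n] (D : Finset (ZMod n))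
    (hD : IsDominating n D) (v : ZMod n) (a b : ℕ)
    (ha : 1 ≤ a) (hb : 1 ≤ b) (hab : a + b ≤ 3)
    (hu : v - (a : ZMod n) ∈ D) (hv : v ∈ D) (hw : v + (b : ZMod n) ∈ D)
    (huv : v - (a : ZMod n) ≠ v) (hvw : v + (b : ZMod n) ≠ v)
    (huw : v - (a : ZMod n) ≠ v + (b : ZMod n)) :
    pn (cycleGraph n) (↑D) v = ∅ := by
  have h1 : (1 : ZMod n) ≠ 0 := by
    intro h
    have hn : n ∣ 1 := by
      have := (ZMod.natCast_eq_zero_iff 1 n).mp (by exact_mod_cast h)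
      exact this
    have hn1 : n = 1 := Nat.dvd_one.mp hn
    subst hn1
    exact huv (Subsingleton.elim _ _)
  ext x
  simp only [pn, Set.mem_diff, Set.mem_empty_iff_false, iff_false, not_and, not_not]
  intro hx
  have hxcases : x = v ∨ x = v + 1 ∨ x = v - 1 := by
    rcases hx with h | h
    · exact Or.inl h
    · rw [cycleGraph, SimpleGraph.fromRel_adj] at h
      rcases h.2 with h' | h'
      · exact Or.inr (Or.inl h')
      · right; right; rw [h']; ring
  have adj : ∀ y z : ZMod n, y ≠ z → (z = y + 1 ∨ y = z + 1) → (cycleGraph n).Adj y z := by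
    intro y z h1 h2
    rw [cycleGraph, SimpleGraph.fromRel_adj]
    exact ⟨h1, h2⟩
  have ha2 : a ≤ 2 := by omega
  have hb2 : b ≤ 2 := by omega
  interval_cases a <;> interval_cases b <;> push_cast at hu hw huv hvw huw <;>
    [skip; skip; skip; omega]
  · -- a = 1, b = 1
    rcases hxcases with h | h | h
    · exact mem_cns D v (v - 1) x hu huv (Or.inr (adj _ _ (by rw [h]; exact huv) (by rw [h]; left; ring)))
    · exact mem_cns D v (v + 1) x hw hvw (Or.inl h)
    · exact mem_cns D v (v - 1) x hu huv (Or.inl h)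
  · -- a = 1, b = 2
    rcases hxcases with h | h | h
    · exact mem_cns D v (v - 1) x hu huv (Or.inr (adj _ _ (by rw [h]; exact huv) (by rw [h]; left; ring)))
    · refine mem_cns D v (v + 2) x hw hvw (Or.inr (adj _ _ ?_ ?_))
      · rw [h]; intro hc
        apply h1
        have : v + 2 - (v + 1) = (0 : ZMod n) := by rw [hc]; ring
        calc (1 : ZMod n) = v + 2 - (v + 1) := by ring
          _ = 0 := this
      · rw [h]; right; ring
    · exact mem_cns D v (v - 1) x hu huv (Or.inl h)
  · -- a = 2, b = 1
    rcases hxcases with h | h | h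
    · exact mem_cns D v (v + 1) x hw hvw (Or.inr (adj _ _ (by rw [h]; exact hvw) (by rw [h]; right; ring)))
    · exact mem_cns D v (v + 1) x hw hvw (Or.inl h)
    · refine mem_cns D v (v - 2) x hu huv (Or.inr (adj _ _ ?_ ?_))
      · rw [h]; intro hc
        apply h1
        calc (1 : ZMod n) = v - 1 - (v - 2) := by ring
          _ = 0 := by rw [← hc]; ring
      · rw [h]; left; ring
end
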